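/- arXiv:1508.03426 — 3 statements merged into one kernel-verified Lean document; each statement's English description precedes it below -/
import Mathlib

section
/- Let U and V be vector spaces, L : V → U and K : U → V linear maps such that U = Ker(L∘K) ⊕ Im(L∘K) (internal direct sum). Then V = Ker(L∘K∘L) ⊕ Im(K∘L∘K) (internal direct sum). -/
/-- Lemma 3.1(i): if `U = Ker(L∘K) ⊕ Im(L∘K)` then `V = Ker(L∘K∘L) ⊕ Im(K∘L∘K)`. -/
theorem stmt_0 {F : Type*} [Field F] {U V : Type*}
    [AddCommGroup U] [Module F U] [AddCommGroup V] [Module F V]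
    (L : V →ₗ[F] U) (K : U →ₗ[F] V)
    (h : IsCompl (LinearMap.ker (L ∘ₗ K)) (LinearMap.range (L ∘ₗ K))) :
    IsCompl (LinearMap.ker (L ∘ₗ K ∘ₗ L)) (LinearMap.range (K ∘ₗ L ∘ₗ K)) := by
  have hd := h.disjoint
  have hc := h.codisjoint
  rw [codisjoint_iff, eq_top_iff] at hc
  rw [Submodule.disjoint_def] at hd
  constructor
  · rw [Submodule.disjoint_def]
    intro v hv hr
    obtain ⟨u, rfl⟩ := hr
    simp only [LinearMap.mem_ker, LinearMap.comp_apply] at hv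
    have h1 : (L ∘ₗ K) ((L ∘ₗ K) u) ∈ LinearMap.ker (L ∘ₗ K) := by
      simpa [LinearMap.mem_ker, LinearMap.comp_apply] using hv
    have h2 : (L ∘ₗ K) ((L ∘ₗ K) u) ∈ LinearMap.range (L ∘ₗ K) :=
      ⟨(L ∘ₗ K) u, rfl⟩
    have h3 := hd _ h1 h2
    have h4 : (L ∘ₗ K) u ∈ LinearMap.ker (L ∘ₗ K) := h3
    have h5 := hd _ h4 ⟨u, rfl⟩
    simp only [LinearMap.comp_apply] at h5 ⊢
    rw [h5, map_zero]
  · rw [codisjoint_iff, eq_top_iff]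
    intro v _
    have h1 : L v ∈ LinearMap.ker (L ∘ₗ K) ⊔ LinearMap.range (L ∘ₗ K) :=
      hc (Submodule.mem_top)
    obtain ⟨a, ha, u, hu, hau⟩ := Submodule.mem_sup.mp h1
    obtain ⟨u, rfl⟩ := hu
    have h2 : u ∈ LinearMap.ker (L ∘ₗ K) ⊔ LinearMap.range (L ∘ₗ K) :=
      hc (Submodule.mem_top)
    obtain ⟨b, hb, w, hw, hbw⟩ := Submodule.mem_sup.mp h2
    obtain ⟨w, rfl⟩ := hw
    rw [Submodule.mem_sup]
    refine ⟨v - (K ∘ₗ L ∘ₗ K) w, ?_, (K ∘ₗ L ∘ₗ K) w, ⟨w, rfl⟩, by abel⟩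
    rw [LinearMap.mem_ker] at ha hb ⊢
    simp only [LinearMap.comp_apply, map_sub] at ha hb hau ⊢
    have hv : L v = a + L (K b) + L (K (L (K w))) := by
      rw [← hau, ← hbw]; simp only [LinearMap.comp_apply, map_add]; abel
    rw [hv]
    simp only [map_add, ha, hb, map_zero, zero_add, add_zero, sub_self]
end

section
/- Let U, V be vector spaces and L : V → U, K : U → V linear maps with U = Ker(L∘K) ⊕ Im(L∘K). If f ∈ Ker(L∘K∘L) ∩ Im(K∘L∘K), then f = 0. -/
/-- Uniqueness part of Lemma 3.1(i): an element of `Ker(L∘K∘L) ∩ Im(K∘L∘K)` is zero. -/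
theorem stmt_2 {F : Type*} [Field F] {U V : Type*}
    [AddCommGroup U] [Module F U] [AddCommGroup V] [Module F V]
    (L : V →ₗ[F] U) (K : U →ₗ[F] V)
    (h : IsCompl (LinearMap.ker (L ∘ₗ K)) (LinearMap.range (L ∘ₗ K)))
    (f : V) (hf : f ∈ LinearMap.ker (L ∘ₗ K ∘ₗ L) ⊓ LinearMap.range (K ∘ₗ L ∘ₗ K)) :
    f = 0 := by
  rw [Submodule.mem_inf] at hf
  obtain ⟨hker, u, hu⟩ := hf
  simp only [LinearMap.mem_ker, LinearMap.comp_apply] at hker hu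
  have hLf : L f = 0 := by
    have hm : L f ∈ LinearMap.ker (L ∘ₗ K) ⊓ LinearMap.range (L ∘ₗ K) := by
      refine ⟨by simpa [LinearMap.mem_ker] using hker, ⟨L (K u), ?_⟩⟩
      simp only [LinearMap.comp_apply]; rw [hu]
    simpa using h.disjoint.le_bot hm
  have hy : L (K u) = 0 := by
    have hm : L (K u) ∈ LinearMap.ker (L ∘ₗ K) ⊓ LinearMap.range (L ∘ₗ K) := by
      refine ⟨LinearMap.mem_ker.mpr ?_, ⟨u, rfl⟩⟩
      show L (K (L (K u))) = 0
      rw [hu]; exact hLf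
    simpa using h.disjoint.le_bot hm
  rw [← hu, hy, map_zero]
end

section
/- Let P be a ℕ-graded vector space with operators Δ of degree -2 and R² of degree +2 such that Δ R² : P_{k-2} → P_{k-2} satisfies P_{k-2} = Ker(ΔR²) ⊕ Im(ΔR²) for a given k ≥ 2. Then P_k = Ker(ΔR²Δ)∩P_k ⊕ R²ΔR²(P_{k-2}). -/
/-- Theorem 3.1 (generalized Fischer decomposition step): if
`P_{k-2} = Ker(ΔR²) ⊕ Im(ΔR²)` then `P_k = (Ker(ΔR²Δ) ∩ P_k) ⊕ R²ΔR²(P_{k-2})`. -/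
theorem stmt_11 {F : Type*} [Field F] {W : Type*} [AddCommGroup W] [Module F W]
    (Pg : ℤ → Submodule F W) (Δ R₂ : W →ₗ[F] W)
    (hΔdeg : ∀ j : ℤ, Submodule.map Δ (Pg j) ≤ Pg (j - 2))
    (hRdeg : ∀ j : ℤ, Submodule.map R₂ (Pg j) ≤ Pg (j + 2))
    (k : ℤ) (hk : 2 ≤ k)
    (hsingle :
      Disjoint (LinearMap.ker (Δ ∘ₗ R₂) ⊓ Pg (k - 2))
        (Submodule.map (Δ ∘ₗ R₂) (Pg (k - 2))) ∧
      Pg (k - 2) = (LinearMap.ker (Δ ∘ₗ R₂) ⊓ Pg (k - 2)) ⊔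
        Submodule.map (Δ ∘ₗ R₂) (Pg (k - 2))) :
    Disjoint (LinearMap.ker (Δ ∘ₗ R₂ ∘ₗ Δ) ⊓ Pg k)
        (Submodule.map (R₂ ∘ₗ Δ ∘ₗ R₂) (Pg (k - 2))) ∧
    Pg k = (LinearMap.ker (Δ ∘ₗ R₂ ∘ₗ Δ) ⊓ Pg k) ⊔
        Submodule.map (R₂ ∘ₗ Δ ∘ₗ R₂) (Pg (k - 2)) := by
  obtain ⟨hdisj, hsup⟩ := hsingle
  -- basic degree facts
  have hR : ∀ x ∈ Pg (k - 2), R₂ x ∈ Pg k := by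
    intro x hx
    have := hRdeg (k - 2) ⟨x, hx, rfl⟩
    simpa [sub_add_cancel] using this
  have hΔk : ∀ x ∈ Pg k, Δ x ∈ Pg (k - 2) := by
    intro x hx
    exact hΔdeg k ⟨x, hx, rfl⟩
  have hT : ∀ x ∈ Pg (k - 2), Δ (R₂ x) ∈ Pg (k - 2) := by
    intro x hx
    exact hΔk _ (hR x hx)
  -- key: for x ∈ Pg (k-2), there is v ∈ Pg (k-2) with ΔR₂ x = (ΔR₂)² v
  have key : ∀ x ∈ Pg (k - 2), ∃ v ∈ Pg (k - 2), Δ (R₂ x) = Δ (R₂ (Δ (R₂ v))) := by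
    intro x hx
    have hx' : x ∈ (LinearMap.ker (Δ ∘ₗ R₂) ⊓ Pg (k - 2)) ⊔
        Submodule.map (Δ ∘ₗ R₂) (Pg (k - 2)) := hsup ▸ hx
    rcases Submodule.mem_sup.1 hx' with ⟨u, hu, w, hw, hsum⟩
    rcases hw with ⟨v, hv, rfl⟩
    refine ⟨v, hv, ?_⟩
    have hu0 : Δ (R₂ u) = 0 := hu.1
    have : Δ (R₂ x) = Δ (R₂ u) + Δ (R₂ ((Δ ∘ₗ R₂) v)) := by
      rw [← hsum]; simp
    simpa [hu0] using this
  constructor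
  · -- disjointness
    rw [Submodule.disjoint_def]
    rintro x ⟨hker, hxk⟩ ⟨q, hq, rfl⟩
    have hker' : Δ (R₂ (Δ (R₂ (Δ (R₂ q))))) = 0 := by
      simpa using hker
    -- T² q ∈ ker T ⊓ S and ∈ map T S, hence 0
    have h2 : Δ (R₂ (Δ (R₂ q))) = 0 := by
      have := Submodule.disjoint_def.1 hdisj (Δ (R₂ (Δ (R₂ q))))
        ⟨by simpa using hker', hT _ (hT _ hq)⟩
        ⟨Δ (R₂ q), hT _ hq, rfl⟩
      exact this
    have h1 : Δ (R₂ q) = 0 := by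
      have := Submodule.disjoint_def.1 hdisj (Δ (R₂ q))
        ⟨by simpa using h2, hT _ hq⟩ ⟨q, hq, rfl⟩
      exact this
    simp [h1]
  · -- the sup decomposition
    apply le_antisymm
    · intro p hp
      have hΔp : Δ p ∈ Pg (k - 2) := hΔk p hp
      have hΔp' : Δ p ∈ (LinearMap.ker (Δ ∘ₗ R₂) ⊓ Pg (k - 2)) ⊔
          Submodule.map (Δ ∘ₗ R₂) (Pg (k - 2)) := hsup ▸ hΔp
      rcases Submodule.mem_sup.1 hΔp' with ⟨u, hu, w, hw, hsum⟩
      rcases hw with ⟨q, hq, rfl⟩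
      rcases key q hq with ⟨v, hv, hvq⟩
      refine Submodule.mem_sup.2 ⟨p - R₂ (Δ (R₂ v)), ⟨?_, ?_⟩,
        R₂ (Δ (R₂ v)), ⟨v, hv, rfl⟩, by abel⟩
      · -- kernel membership
        have hu0 : Δ (R₂ u) = 0 := hu.1
        have e1 : Δ (R₂ (Δ p)) = Δ (R₂ (Δ (R₂ q))) := by
          rw [← hsum]; simp [hu0]
        have e2 : Δ (R₂ (Δ (R₂ (Δ (R₂ v))))) = Δ (R₂ (Δ (R₂ q))) := by
          rw [← hvq]
        have : (Δ ∘ₗ R₂ ∘ₗ Δ) (p - R₂ (Δ (R₂ v))) = 0 := by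
          simp only [LinearMap.comp_apply, map_sub]
          rw [e1, e2, sub_self]
        exact LinearMap.mem_ker.2 this
      · exact Submodule.sub_mem _ hp (hR _ (hT _ hv))
    · -- reverse inclusion
      apply sup_le
      · exact inf_le_right
      · rintro x ⟨q, hq, rfl⟩
        exact hR _ (hT _ hq)
end
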